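/- Let Γ = ℤ₂ ⊕ ℤ₂ ⊕ ℤ₂ with standard basis vectors e₁, e₂, e₃, regarded as the dual group of the compact group G = ℤ₂ ⊕ ℤ₂ ⊕ ℤ₂ via the pairing γ(g) = (−1)^{γ₁g₁ + γ₂g₂ + γ₃g₃}, and let E = {e₂, e₃, e₁+e₂, e₁+e₃}. Then for every odd integer n ≥ 3, κ_n(E) ≥ |1 − e^{iπ(1−1/n)}|. -/

import Mathlib

open Complex
open scoped Real

/-- The pairing of `Γ = ℤ₂ ⊕ ℤ₂ ⊕ ℤ₂` with `G = ℤ₂ ⊕ ℤ₂ ⊕ ℤ₂`: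
`γ(g) = (−1)^(γ₁g₁ + γ₂g₂ + γ₃g₃)`. -/
def chi (γ g : ZMod 2 × ZMod 2 × ZMod 2) : ℂ :=
  (-1 : ℂ) ^ ((γ.1 * g.1 + γ.2.1 * g.2.1 + γ.2.2 * g.2.2).val)

/-- `κₙ(E)` for `E ⊆ ℤ₂ ⊕ ℤ₂ ⊕ ℤ₂` (viewed as the dual of `G = ℤ₂ ⊕ ℤ₂ ⊕ ℤ₂` via the
pairing `chi`): the infimum of `ε ≥ 0` such that every function from `E` into the
`n`-th roots of unity can be approximated within `ε` by a character evaluation. -/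
noncomputable def kappaNZ2 (n : ℕ) (E : Set (ZMod 2 × ZMod 2 × ZMod 2)) : ℝ :=
  sInf {ε : ℝ | 0 ≤ ε ∧ ∀ φ : (ZMod 2 × ZMod 2 × ZMod 2) → ℂ,
    (∀ γ ∈ E, (φ γ) ^ n = 1) →
      ∃ x : ZMod 2 × ZMod 2 × ZMod 2, ∀ γ ∈ E, ‖φ γ - chi γ x‖ < ε}

/-!
Since `e₂ + e₃ + (e₁ + e₂) = e₁ + e₃`, every character value on `e₁ + e₃` is the product of
its values on the other three elements of `E`, all of which are `±1`. Take `φ = ω` on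
`e₁ + e₃` and `φ = 1` elsewhere, with `ω = e^{iπ(1 - 1/n)}` an `n`-th root of unity for odd `n`.
If the three other values are `1`, then `γ(x) = 1` at `e₁ + e₃` and the error there is
`|ω - 1|`; otherwise some `γ(x) = -1` where `φ = 1`, and the error is `2 ≥ |1 - ω|`.
-/

lemma neg_one_pow_val_add (a b : ZMod 2) :
    (-1 : ℂ) ^ (a + b).val = (-1) ^ a.val * (-1) ^ b.val := by
  rw [← pow_add, ZMod.val_add, ← neg_one_pow_eq_pow_mod_two]

lemma chi_add_left (γ γ' x : ZMod 2 × ZMod 2 × ZMod 2) :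
    chi (γ + γ') x = chi γ x * chi γ' x := by
  simp only [chi, ← neg_one_pow_val_add]
  congr 2
  simp only [Prod.fst_add, Prod.snd_add]
  ring

lemma chi_eq_one_or_eq_neg_one (γ x : ZMod 2 × ZMod 2 × ZMod 2) :
    chi γ x = 1 ∨ chi γ x = -1 := by
  rw [chi]
  exact neg_one_pow_eq_or ℂ _

lemma norm_chi (γ x : ZMod 2 × ZMod 2 × ZMod 2) : ‖chi γ x‖ = 1 := by
  rcases chi_eq_one_or_eq_neg_one γ x with h | h <;> simp [h]

lemma kappaNZ2_set_nonempty {n : ℕ} (hn : n ≠ 0) (E : Set (ZMod 2 × ZMod 2 × ZMod 2)) :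
    {ε : ℝ | 0 ≤ ε ∧ ∀ φ : (ZMod 2 × ZMod 2 × ZMod 2) → ℂ,
    (∀ γ ∈ E, (φ γ) ^ n = 1) →
      ∃ x : ZMod 2 × ZMod 2 × ZMod 2, ∀ γ ∈ E, ‖φ γ - chi γ x‖ < ε}.Nonempty := by
  refine ⟨3, by norm_num, fun φ hφ => ⟨0, fun γ hγ => ?_⟩⟩
  calc ‖φ γ - chi γ 0‖ ≤ ‖φ γ‖ + ‖chi γ 0‖ := norm_sub_le _ _
    _ = 2 := by rw [norm_eq_one_of_pow_eq_one (hφ γ hγ) hn, norm_chi]; norm_num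
    _ < 3 := by norm_num

lemma le_kappaNZ2 {n : ℕ} (hn : n ≠ 0) {E : Set (ZMod 2 × ZMod 2 × ZMod 2)} {δ : ℝ}
    (φ : ZMod 2 × ZMod 2 × ZMod 2 → ℂ) (hφ : ∀ γ ∈ E, φ γ ^ n = 1)
    (hfar : ∀ x, ∃ γ ∈ E, δ ≤ ‖φ γ - chi γ x‖) : δ ≤ kappaNZ2 n E := by
  refine le_csInf (kappaNZ2_set_nonempty hn E) fun ε ⟨_, hε⟩ => ?_
  obtain ⟨x, hx⟩ := hε φ hφ
  obtain ⟨γ, hγ, hδ⟩ := hfar x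
  exact hδ.trans (hx γ hγ).le

lemma exp_pi_mul_one_sub_one_div_pow_eq_one {n : ℕ} (hodd : Odd n) :
    Complex.exp (π * (1 - 1 / (n : ℂ)) * I) ^ n = 1 := by
  have hn : (n : ℂ) ≠ 0 := Nat.cast_ne_zero.mpr hodd.pos.ne'
  have : (n : ℂ) * (π * (1 - 1 / (n : ℂ)) * I) = ((n - 1 : ℕ) : ℂ) * (π * I) := by
    push_cast [hodd.pos]
    field_simp
  rw [← Complex.exp_nat_mul, this, Complex.exp_nat_mul, Complex.exp_pi_mul_I]
  exact (Nat.Odd.sub_odd hodd odd_one).neg_one_pow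

lemma exists_chi_eq_neg_one_or_chi_one_zero_one_eq_one (x : ZMod 2 × ZMod 2 × ZMod 2) :
    (∃ γ ∈ ({(0, 1, 0), (0, 0, 1), (1, 1, 0)} : Set (ZMod 2 × ZMod 2 × ZMod 2)),
      chi γ x = -1) ∨ chi (1, 0, 1) x = 1 := by
  have hrel : ((1, 0, 1) : ZMod 2 × ZMod 2 × ZMod 2) = (0, 1, 0) + (0, 0, 1) + (1, 1, 0) := by
    decide
  rcases chi_eq_one_or_eq_neg_one (0, 1, 0) x with h₁ | h₁
  · rcases chi_eq_one_or_eq_neg_one (0, 0, 1) x with h₂ | h₂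
    · rcases chi_eq_one_or_eq_neg_one (1, 1, 0) x with h₃ | h₃
      · right
        rw [hrel, chi_add_left, chi_add_left, h₁, h₂, h₃]
        norm_num
      · exact Or.inl ⟨_, by simp, h₃⟩
    · exact Or.inl ⟨_, by simp, h₂⟩
  · exact Or.inl ⟨_, by simp, h₁⟩

theorem stmt11_general (n : ℕ) (hodd : Odd n) :
    ‖1 - Complex.exp (π * (1 - 1 / (n : ℂ)) * Complex.I)‖
      ≤ kappaNZ2 n {(0, 1, 0), (0, 0, 1), (1, 1, 0), (1, 0, 1)} := by
  set ω := Complex.exp (π * (1 - 1 / (n : ℂ)) * Complex.I)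
  have hω : ω ^ n = 1 := exp_pi_mul_one_sub_one_div_pow_eq_one hodd
  refine le_kappaNZ2 hodd.pos.ne' (Function.update 1 (1, 0, 1) ω) ?_ fun x => ?_
  · rintro γ -
    by_cases h : γ = (1, 0, 1) <;> simp [h, hω]
  rcases exists_chi_eq_neg_one_or_chi_one_zero_one_eq_one x with ⟨γ, hγ, hχ⟩ | hχ
  · refine ⟨γ, by simp only [Set.mem_insert_iff, Set.mem_singleton_iff] at hγ ⊢; tauto, ?_⟩
    have hγ' : γ ≠ (1, 0, 1) := by rintro rfl; simp at hγ
    rw [Function.update_of_ne hγ', hχ]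
    calc ‖1 - ω‖ ≤ ‖(1 : ℂ)‖ + ‖ω‖ := norm_sub_le _ _
      _ = ‖(1 : ℂ) - -1‖ := by rw [norm_eq_one_of_pow_eq_one hω hodd.pos.ne']; norm_num
  · exact ⟨(1, 0, 1), by simp, by rw [Function.update_self, hχ, norm_sub_rev]⟩

theorem stmt11 (n : ℕ) (hn : 3 ≤ n) (hodd : Odd n) :
    ‖1 - Complex.exp (π * (1 - 1 / (n : ℂ)) * Complex.I)‖
      ≤ kappaNZ2 n {(0, 1, 0), (0, 0, 1), (1, 1, 0), (1, 0, 1)} :=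
  stmt11_general n hodd
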